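/- arXiv:2407.04375 — 3 statements merged into one kernel-verified Lean document; each statement's English description precedes it below -/
import Mathlib

section
/- Given s distinct numbers j_1 < j_2 < ... < j_s (s ≥ 2) and an integer i with 1 ≤ i ≤ s−1, there is a unique way to order {j_1, ..., j_s} as a hook with exactly i inversions, namely the list [j_{i+1}, j_1, ..., j_i, j_{i+2}, ..., j_s]. -/
/-- A hook: a list [t₁, …, t_h] of distinct positive integers, h ≥ 2, with t₁ > t₂ and
t₂ < t₃ < ⋯ < t_h. -/
def IsHook (l : List ℕ) : Prop :=
  (∀ x ∈ l, 0 < x) ∧ l.Nodup ∧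
    ∃ t₁ t₂ rest, l = t₁ :: t₂ :: rest ∧ t₂ < t₁ ∧ List.Chain' (· < ·) (t₂ :: rest)

/-- The number of inversions of a list: pairs of positions i < j with l_i > l_j. -/
def invCount (l : List ℕ) : ℕ :=
  (Finset.univ.filter fun p : Fin l.length × Fin l.length =>
    p.1 < p.2 ∧ l.get p.2 < l.get p.1).card

private lemma aux_count (p : ℕ → Bool) : ∀ l : List ℕ,
    (Finset.univ.filter fun q : Fin l.length => p (l.get q)).card = l.countP p
  | [] => by simp
  | a :: l => by
    rw [Finset.card_filter, List.countP_cons, ← aux_count p l, Finset.card_filter]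
    refine Eq.trans (Fin.sum_univ_succ
      (fun q : Fin (l.length + 1) => if p ((a :: l).get q) = true then 1 else 0)) ?_
    simp [add_comm]
    rfl

private lemma invCount_cons (a : ℕ) (l : List ℕ) :
    invCount (a :: l) = l.countP (fun x => x < a) + invCount l := by
  rw [← aux_count (fun x => decide (x < a)) l]
  unfold invCount
  rw [Finset.card_filter, Finset.card_filter, Finset.card_filter,
    Fintype.sum_prod_type]
  refine Eq.trans (Fin.sum_univ_succ
    (fun x : Fin (l.length + 1) => ∑ y : Fin (a :: l).length,
      if (x, y).1 < (x, y).2 ∧ (a :: l).get (x, y).2 < (a :: l).get (x, y).1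
      then 1 else 0)) ?_
  rw [Fintype.sum_prod_type]
  congr 1
  · refine Eq.trans (Fin.sum_univ_succ
      (fun y : Fin (l.length + 1) =>
        if ((0 : Fin (l.length + 1)), y).1 < ((0 : Fin (l.length + 1)), y).2 ∧
          (a :: l).get ((0 : Fin (l.length + 1)), y).2 <
            (a :: l).get ((0 : Fin (l.length + 1)), y).1 then 1 else 0)) ?_
    simp
  · refine Finset.sum_congr rfl fun p1 _ => ?_
    refine Eq.trans (Fin.sum_univ_succ
      (fun y : Fin (l.length + 1) =>
        if (p1.succ, y).1 < (p1.succ, y).2 ∧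
          (a :: l).get (p1.succ, y).2 < (a :: l).get (p1.succ, y).1 then 1 else 0)) ?_
    simp [Fin.succ_lt_succ_iff]

private lemma invCount_sorted : ∀ {l : List ℕ}, List.Chain' (· < ·) l → invCount l = 0
  | [] => fun _ => by simp [invCount]
  | a :: l => fun h => by
    have hp := (List.isChain_iff_pairwise.mp h)
    rw [List.pairwise_cons] at hp
    rw [invCount_cons, invCount_sorted (List.isChain_iff_pairwise.mpr hp.2),
      List.countP_eq_zero.2]
    intro x hx
    simpa using Nat.not_lt.2 (le_of_lt (hp.1 x hx))

private lemma count_eraseIdx (s : ℕ) (j : Fin s → ℕ) (hmono : StrictMono j) (k : Fin s) :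
    ((List.ofFn j).eraseIdx k).countP (fun x => x < j k) = k := by
  rw [List.eraseIdx_eq_take_drop_succ, List.countP_append]
  have h1 : ((List.ofFn j).take k).countP (fun x => x < j k) = k := by
    rw [List.countP_eq_length.2, List.length_take, List.length_ofFn,
      min_eq_left (le_of_lt k.isLt)]
    intro x hx
    rw [List.mem_iff_getElem] at hx
    obtain ⟨n, hn, rfl⟩ := hx
    have hn' : n < (k : ℕ) := by
      have := hn
      rw [List.length_take, List.length_ofFn] at this
      omega
    rw [List.getElem_take, List.getElem_ofFn]
    simpa using hmono (show (⟨n, lt_trans hn' k.isLt⟩ : Fin s) < k from hn')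
  have h2 : ((List.ofFn j).drop ((k : ℕ) + 1)).countP (fun x => x < j k) = 0 := by
    rw [List.countP_eq_zero]
    intro x hx
    rw [List.mem_iff_getElem] at hx
    obtain ⟨n, hn, rfl⟩ := hx
    have hn' : (k : ℕ) + 1 + n < s := by
      have := hn
      rw [List.length_drop, List.length_ofFn] at this
      omega
    rw [List.getElem_drop, List.getElem_ofFn]
    simp only [decide_eq_true_eq, not_lt]
    exact le_of_lt (hmono (show k < (⟨(k : ℕ) + 1 + n, by simpa using hn'⟩ : Fin s) by
      simp [Fin.lt_def]; omega))
  omega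

/-- Given j₁ < ⋯ < j_s distinct positive integers (s ≥ 2) and 1 ≤ i ≤ s−1, there is a
unique way to order them as a hook with exactly i inversions, namely
[j_{i+1}, j₁, …, j_i, j_{i+2}, …, j_s]. -/
theorem stmt_6 (s : ℕ) (hs : 2 ≤ s) (j : Fin s → ℕ) (hmono : StrictMono j)
    (hpos : ∀ a, 0 < j a) (i : ℕ) (h1 : 1 ≤ i) (h2 : i ≤ s - 1) :
    ∀ l : List ℕ,
      (IsHook l ∧ l.Perm (List.ofFn j) ∧ invCount l = i) ↔
        l = j ⟨i, by omega⟩ :: (List.ofFn j).eraseIdx i := by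
  intro l
  have hi : i < s := by omega
  have hilen : i < (List.ofFn j).length := by simpa using hi
  have hm_sorted : List.Pairwise (· < ·) (List.ofFn j) :=
    List.pairwise_ofFn.2 fun a b h => hmono h
  have hm_nodup : (List.ofFn j).Nodup := List.nodup_ofFn.2 hmono.injective
  have hmi : (List.ofFn j)[i]'hilen = j ⟨i, hi⟩ := List.getElem_ofFn hilen
  have h_erase_sorted : ∀ k : ℕ, List.Pairwise (· < ·) ((List.ofFn j).eraseIdx k) :=
    fun k => hm_sorted.sublist (List.eraseIdx_sublist (List.ofFn j) k)
  have hmemi : j ⟨i, hi⟩ ∈ List.ofFn j := by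
    rw [List.mem_ofFn]; exact ⟨⟨i, hi⟩, rfl⟩
  have perm_target : (List.ofFn j).Perm (j ⟨i, hi⟩ :: (List.ofFn j).eraseIdx i) := by
    refine (List.perm_cons_erase hmemi).trans (List.Perm.cons _ ?_)
    exact hmi ▸ List.erase_getElem hilen
  constructor
  · rintro ⟨⟨hposl, hnd, t₁, t₂, rest, rfl, hlt, hch⟩, hperm, hinv⟩
    have ht₁m : t₁ ∈ List.ofFn j := hperm.subset (List.mem_cons_self)
    obtain ⟨k, hk⟩ := (List.mem_ofFn).1 ht₁m
    have htail : (t₂ :: rest).Perm ((List.ofFn j).erase t₁) :=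
      (List.cons_perm_iff_perm_erase.1 hperm).2
    have htail' : (t₂ :: rest).Perm ((List.ofFn j).eraseIdx (k : ℕ)) := by
      refine htail.trans ?_
      have hgk : (List.ofFn j)[(k : ℕ)]'(by simpa using k.isLt) = t₁ := by
        rw [List.getElem_ofFn]; simpa using hk
      exact hgk ▸ List.erase_getElem (by simpa using k.isLt)
    have heq : (t₂ :: rest) = (List.ofFn j).eraseIdx (k : ℕ) :=
      List.Perm.eq_of_pairwise (fun _ _ _ _ h h' => absurd h' (lt_asymm h))
        (List.isChain_iff_pairwise.mp hch) (h_erase_sorted k) htail'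
    have hinv' : invCount (t₁ :: t₂ :: rest) = (k : ℕ) := by
      rw [invCount_cons, invCount_sorted hch, heq, ← hk,
        count_eraseIdx s j hmono k]
      exact Nat.add_zero _
    have hki : (k : ℕ) = i := by rw [hinv'] at hinv; exact hinv
    have hkk : k = ⟨i, hi⟩ := Fin.ext hki
    rw [heq, hki, ← hk, hkk]
  · rintro rfl
    have hlen : 0 < ((List.ofFn j).eraseIdx i).length := by
      rw [List.length_eraseIdx, if_pos hilen, List.length_ofFn]
      omega
    obtain ⟨t₂, rest, herest⟩ := List.exists_cons_of_ne_nil (List.ne_nil_of_length_pos hlen)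
    have h0i : 0 < i := h1
    have ht₂ : t₂ = j ⟨0, by omega⟩ := by
      have hg : ((List.ofFn j).eraseIdx i)[0]'hlen = t₂ := by
        simp only [herest]; rfl
      rw [List.getElem_eraseIdx, dif_pos h0i, List.getElem_ofFn] at hg
      exact hg.symm
    refine ⟨⟨?_, ?_, j ⟨i, hi⟩, t₂, rest, by rw [herest], ?_, ?_⟩, perm_target.symm, ?_⟩
    · intro x hx
      rcases List.mem_cons.1 hx with h | h
      · subst h; exact hpos _
      · have hxm : x ∈ List.ofFn j := (List.eraseIdx_sublist (List.ofFn j) i).subset h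
        obtain ⟨b, hb⟩ := (List.mem_ofFn).1 hxm
        rw [← hb]; exact hpos _
    · exact perm_target.nodup hm_nodup
    · rw [ht₂]
      exact hmono (show (⟨0, by omega⟩ : Fin s) < ⟨i, hi⟩ by simpa [Fin.lt_def] using h0i)
    · rw [← herest]
      exact List.isChain_iff_pairwise.mpr (h_erase_sorted i)
    · rw [invCount_cons, invCount_sorted (List.isChain_iff_pairwise.mpr (h_erase_sorted i))]
      have hc := count_eraseIdx s j hmono ⟨i, hi⟩
      simpa using hc
end

section
/- Every list σ of distinct numbers admits a unique factorization as a concatenation σ = p η_1 ⋯ η_k, where p is a (possibly empty) strictly increasing list and each η_i is a hook. -/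
def Valid (l : List ℕ) (ph : List ℕ × List (List ℕ)) : Prop :=
  ph.1.Pairwise (· < ·) ∧ (∀ η ∈ ph.2, IsHook η) ∧ l = ph.1 ++ ph.2.flatten

-- existence
lemma exists_valid : ∀ (l : List ℕ), (∀ x ∈ l, 0 < x) → l.Nodup → ∃ ph, Valid l ph := by
  intro l
  induction l with
  | nil => intro _ _; exact ⟨([], []), by simp [Valid], by simp, by simp⟩
  | cons x xs ih =>
    intro hpos hnd
    obtain ⟨⟨p, H⟩, hs, hh, he⟩ := ih (fun y hy => hpos y (by simp [hy]))
      (List.nodup_cons.mp hnd).2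
    simp only at hs hh he
    match p, hs with
    | [], _ =>
      refine ⟨([x], H), ?_, hh, by simp at he ⊢; exact he⟩
      simp
    | y :: p', hs =>
      rcases lt_or_gt_of_ne (show x ≠ y by
        intro h; subst h
        exact (List.nodup_cons.mp hnd).1 (he ▸ List.mem_append_left _ (by simp))) with hxy | hxy
      · refine ⟨(x :: y :: p', H), ?_, hh, by simp [he]⟩
        refine List.pairwise_cons.mpr ⟨?_, hs⟩
        intro b hb
        rcases List.mem_cons.mp hb with rfl | hb
        · exact hxy
        · exact hxy.trans (List.rel_of_pairwise_cons hs hb)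
      · refine ⟨([], (x :: y :: p') :: H), by simp, ?_, by simp [he]⟩
        intro η hη
        rcases List.mem_cons.mp hη with rfl | hη
        · have hsub : ∀ z ∈ (x :: y :: p'), z ∈ x :: xs := by
            intro z hz
            rcases List.mem_cons.mp hz with rfl | hz
            · simp
            · exact List.mem_cons_of_mem _ (he ▸ List.mem_append_left _ hz)
          refine ⟨fun z hz => hpos z (hsub z hz), ?_, x, y, p', rfl, hxy, ?_⟩
          · refine List.nodup_cons.mpr ⟨?_, ?_⟩
            · intro hx
              exact (List.nodup_cons.mp hnd).1 (he ▸ List.mem_append_left _ hx)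
            · have : (y :: p' ++ H.flatten).Nodup := he ▸ (List.nodup_cons.mp hnd).2
              exact (this.sublist (List.sublist_append_left _ _) : (y :: p').Nodup)
          · exact List.isChain_iff_pairwise.mpr hs
        · exact hh η hη

lemma hooks_nil_of_sorted {p : List ℕ} {H : List (List ℕ)}
    (hs : (p ++ H.flatten).Pairwise (· < ·)) (hh : ∀ η ∈ H, IsHook η) : H = [] := by
  cases H with
  | nil => rfl
  | cons η H' =>
    obtain ⟨_, _, t₁, t₂, rest, rfl, hlt, _⟩ := hh η (by simp)
    have hsub : List.Sublist [t₁, t₂] (p ++ ((t₁ :: t₂ :: rest) :: H').flatten) := by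
      refine List.Sublist.trans ?_ (List.sublist_append_right _ _)
      simp only [List.flatten_cons]
      refine List.Sublist.trans ?_ (List.sublist_append_left _ _)
      exact (List.nil_sublist rest).cons₂ t₂ |>.cons₂ t₁
    have h2 := hs.sublist hsub
    have h3 : t₁ < t₂ := List.rel_of_pairwise_cons h2 (List.mem_cons_self)
    omega

lemma suffix_hook_eq {l₁ l₂ : List ℕ} {a b a' b' : ℕ} {s s' : List ℕ}
    (heq : l₁ ++ a :: b :: s = l₂ ++ a' :: b' :: s')
    (hba : b < a) (hba' : b' < a')
    (hc : List.Chain' (· < ·) (b :: s)) (hc' : List.Chain' (· < ·) (b' :: s')) :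
    l₁ = l₂ ∧ a = a' ∧ b = b' ∧ s = s' := by
  have h1 : a :: b :: s <:+ l₂ ++ a' :: b' :: s' := heq ▸ List.suffix_append l₁ _
  have h2 : a' :: b' :: s' <:+ l₂ ++ a' :: b' :: s' := List.suffix_append l₂ _
  have key : a :: b :: s = a' :: b' :: s' := by
    rcases List.suffix_or_suffix_of_suffix h1 h2 with h | h <;> obtain ⟨t, ht⟩ := h
    · cases t with
      | nil => simpa using ht
      | cons c t' =>
        exfalso
        have ht' : t' ++ a :: b :: s = b' :: s' := (by simpa using ht : _ ∧ _).2
        have : List.Chain' (· < ·) (a :: b :: s) := hc'.suffix ⟨t', ht'⟩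
        exact absurd (List.isChain_cons_cons.mp this).1 (by omega)
    · cases t with
      | nil => simpa using ht.symm
      | cons c t' =>
        exfalso
        have ht' : t' ++ a' :: b' :: s' = b :: s := (by simpa using ht : _ ∧ _).2
        have : List.Chain' (· < ·) (a' :: b' :: s') := hc.suffix ⟨t', ht'⟩
        exact absurd (List.isChain_cons_cons.mp this).1 (by omega)
  obtain ⟨rfl, rfl, rfl⟩ : a = a' ∧ b = b' ∧ s = s' := by
    injection key with h1 key; injection key with h2 h3; exact ⟨h1, h2, h3⟩
  exact ⟨List.append_cancel_right heq, rfl, rfl, rfl⟩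

lemma valid_unique : ∀ n (l : List ℕ), l.length ≤ n →
    ∀ ph ph', Valid l ph → Valid l ph' → ph = ph' := by
  intro n
  induction n with
  | zero =>
    intro l hl ph ph' h h'
    have hl0 : l = [] := List.length_eq_zero_iff.mp (Nat.le_zero.mp hl)
    subst hl0
    have key : ∀ q : List ℕ × List (List ℕ), Valid [] q → q = ([], []) := by
      rintro ⟨p, H⟩ ⟨_, hh, he⟩
      simp only at *
      obtain ⟨hp, hf⟩ := List.append_eq_nil_iff.mp he.symm
      cases H with
      | nil => simp [hp]
      | cons η H' =>
        obtain ⟨_, _, t₁, t₂, rest, rfl, _, _⟩ := hh η (by simp)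
        simp at hf
    rw [key ph h, key ph' h']
  | succ n ih =>
    intro l hl ph ph' h h'
    obtain ⟨hs, hh, he⟩ := h
    obtain ⟨hs', hh', he'⟩ := h'
    rcases List.eq_nil_or_concat ph.2 with hH | ⟨H₀, η, hH⟩
    · have hsort : l.Pairwise (· < ·) := by rw [he, hH]; simpa using hs
      have hH'2 : ph'.2 = [] := hooks_nil_of_sorted (he' ▸ hsort) hh'
      have : ph.1 = ph'.1 := by
        have := he.symm.trans he'
        rwa [hH, hH'2, List.flatten_nil, List.append_nil, List.append_nil] at this
      exact Prod.ext this (hH.trans hH'2.symm)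
    · rcases List.eq_nil_or_concat ph'.2 with hH' | ⟨H₀', η', hH'⟩
      · have hsort : l.Pairwise (· < ·) := by rw [he', hH']; simpa using hs'
        have : ph.2 = [] := hooks_nil_of_sorted (he ▸ hsort) hh
        rw [List.concat_eq_append] at hH
        simp [this] at hH
      · rw [List.concat_eq_append] at hH hH'
        obtain ⟨_, _, a, b, s, hη, hba, hcs⟩ := hh η (by rw [hH]; simp)
        obtain ⟨_, _, a', b', s', hη', hba', hcs'⟩ := hh' η' (by rw [hH']; simp)
        have he2 : (ph.1 ++ H₀.flatten) ++ a :: b :: s = (ph'.1 ++ H₀'.flatten) ++ a' :: b' :: s' := by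
          have e1 : l = (ph.1 ++ H₀.flatten) ++ a :: b :: s := by
            rw [he, hH, hη]; simp
          have e2 : l = (ph'.1 ++ H₀'.flatten) ++ a' :: b' :: s' := by
            rw [he', hH', hη']; simp
          rw [← e1, ← e2]
        obtain ⟨hpre, rfl, rfl, rfl⟩ := suffix_hook_eq he2 hba hba' hcs hcs'
        have hlen : (ph.1 ++ H₀.flatten).length ≤ n := by
          have : l.length = (ph.1 ++ H₀.flatten).length + (s.length + 2) := by
            rw [he, hH, hη]; simp; omega
          omega
        have hrec := ih (ph.1 ++ H₀.flatten) hlen (ph.1, H₀) (ph'.1, H₀')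
          ⟨hs, fun η hη => hh η (by rw [hH]; exact List.mem_append_left _ hη), rfl⟩
          ⟨hs', fun η hη => hh' η (by rw [hH']; exact List.mem_append_left _ hη), hpre⟩
        have h1 : ph.1 = ph'.1 := (Prod.ext_iff.mp hrec).1
        have h2 : H₀ = H₀' := (Prod.ext_iff.mp hrec).2
        refine Prod.ext h1 ?_
        rw [hH, hH', h2, hη, hη']

/-- Every list of distinct (positive) numbers factors uniquely as an increasing list
followed by a concatenation of hooks (the hook factorization). -/
theorem stmt_7 (l : List ℕ) (hpos : ∀ x ∈ l, 0 < x) (hnd : l.Nodup) :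
    ∃! ph : List ℕ × List (List ℕ),
      ph.1.Pairwise (· < ·) ∧ (∀ η ∈ ph.2, IsHook η) ∧ l = ph.1 ++ ph.2.flatten := by
  obtain ⟨ph, h⟩ := exists_valid l hpos hnd
  exact ⟨ph, h, fun ph' h' => valid_unique l.length l le_rfl ph' ph h' h⟩
end

section
/- Let Ĝ be the building set of the coned graph ĈΓ (subsets of {0,...,n} of size ≥ 2 inducing connected subgraphs of ĈΓ), and order its elements so that all blocks containing 0 come first (in any order refining inclusion) followed by all blocks not containing 0 (in any order refining inclusion). Then for every t, the initial segment Ĝ_t = {G_1, ..., G_t} is a building set for the arrangement it induces: every connected intersection of elements of Ĝ_t is the transversal intersection of its minimal containing elements in Ĝ_t. In combinatorial terms: if B_1, ..., B_k are blocks in Ĝ_t that are minimal among those containing a given intersection, then the B_i have pairwise disjoint non-singleton parts and each B_i belongs to Ĝ_t. -/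
/-- The cone of a graph Γ on vertex set [n]: a new apex vertex 0 is joined to every
vertex, and the other vertices (identified via `Fin.succ`) keep the adjacency of Γ. -/
def coneGraph {n : ℕ} (Γ : SimpleGraph (Fin n)) : SimpleGraph (Fin (n + 1)) where
  Adj a b := a ≠ b ∧ (a = 0 ∨ b = 0 ∨
    ∃ i j : Fin n, Γ.Adj i j ∧ a = i.succ ∧ b = j.succ)
  symm := ⟨by
    rintro a b ⟨hab, h⟩
    refine ⟨hab.symm, ?_⟩
    rcases h with h | h | ⟨i, j, hij, ha, hb⟩
    · exact Or.inr (Or.inl h)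
    · exact Or.inl h
    · exact Or.inr (Or.inr ⟨j, i, hij.symm, hb, ha⟩)⟩
  loopless := ⟨fun a h => h.1 rfl⟩


noncomputable def diagLine (n : ℕ) : Submodule ℂ (Fin n → ℂ) :=
  Submodule.span ℂ {fun _ => (1 : ℂ)}

abbrev Qspace (n : ℕ) := (Fin n → ℂ) ⧸ diagLine n

noncomputable def eqSub (n : ℕ) (i j : Fin n) : Submodule ℂ (Fin n → ℂ) :=
  LinearMap.ker ((LinearMap.proj i : (Fin n → ℂ) →ₗ[ℂ] ℂ) - LinearMap.proj j)

/-- The subspace of ℂⁿ/(ℂ·(1,…,1)) of vectors constant on the block `B`. -/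
noncomputable def Hblock (n : ℕ) (B : Finset (Fin n)) : Submodule ℂ (Qspace n) :=
  Submodule.map (diagLine n).mkQ (⨅ i ∈ B, ⨅ j ∈ B, eqSub n i j)

noncomputable def codim (n : ℕ) (W : Submodule ℂ (Qspace n)) : ℕ :=
  Module.finrank ℂ (Qspace n) - Module.finrank ℂ W

-- auxiliary development
noncomputable def EB (n : ℕ) (B : Finset (Fin n)) : Submodule ℂ (Fin n → ℂ) :=
  ⨅ i ∈ B, ⨅ j ∈ B, eqSub n i j

lemma mem_EB {n : ℕ} {B : Finset (Fin n)} {x : Fin n → ℂ} :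
    x ∈ EB n B ↔ ∀ i ∈ B, ∀ j ∈ B, x i = x j := by
  simp [EB, eqSub, Submodule.mem_iInf, LinearMap.mem_ker, sub_eq_zero]

lemma diag_le_EB {n : ℕ} (B : Finset (Fin n)) : diagLine n ≤ EB n B := by
  rw [diagLine, Submodule.span_le]
  rintro x hx
  rw [Set.mem_singleton_iff] at hx
  subst hx
  exact mem_EB.2 fun i _ j _ => rfl

lemma Hblock_eq_map {n : ℕ} (B : Finset (Fin n)) :
    Hblock n B = Submodule.map (diagLine n).mkQ (EB n B) := rfl

lemma comap_Hblock {n : ℕ} (B : Finset (Fin n)) :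
    Submodule.comap (diagLine n).mkQ (Hblock n B) = EB n B := by
  rw [Hblock_eq_map, Submodule.comap_map_eq, Submodule.ker_mkQ]
  exact sup_eq_left.mpr (diag_le_EB B)

lemma Hblock_le_iff {n : ℕ} (B₁ B₂ : Finset (Fin n)) :
    Hblock n B₁ ≤ Hblock n B₂ ↔ EB n B₁ ≤ EB n B₂ := by
  constructor
  · intro h
    calc EB n B₁ ≤ Submodule.comap (diagLine n).mkQ (Hblock n B₁) := by
          rw [comap_Hblock]
      _ ≤ Submodule.comap (diagLine n).mkQ (Hblock n B₂) := Submodule.comap_mono h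
      _ = EB n B₂ := comap_Hblock B₂
  · intro h
    rw [Hblock_eq_map, Hblock_eq_map]
    exact Submodule.map_mono h

lemma comap_iInf_Hblock {n m : ℕ} (G : Fin m → Finset (Fin n)) (S : Finset (Fin m)) :
    Submodule.comap (diagLine n).mkQ (⨅ k ∈ S, Hblock n (G k)) = ⨅ k ∈ S, EB n (G k) := by
  ext x
  simp only [Submodule.mem_comap, Submodule.mem_iInf]
  constructor
  · intro h k hk
    rw [← comap_Hblock (G k)]
    exact h k hk
  · intro h k hk
    have := h k hk
    rw [← comap_Hblock (G k)] at this
    exact this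

lemma iInf_Hblock_eq_map {n m : ℕ} (G : Fin m → Finset (Fin n)) (S : Finset (Fin m)) :
    (⨅ k ∈ S, Hblock n (G k)) = Submodule.map (diagLine n).mkQ (⨅ k ∈ S, EB n (G k)) := by
  conv_lhs => rw [← Submodule.map_comap_eq_of_surjective
    ((diagLine n).mkQ_surjective) (⨅ k ∈ S, Hblock n (G k))]
  rw [comap_iInf_Hblock]

lemma iInf_Hblock_le_iff {n m : ℕ} (G : Fin m → Finset (Fin n)) (S : Finset (Fin m))
    (B : Finset (Fin n)) :
    (⨅ k ∈ S, Hblock n (G k)) ≤ Hblock n B ↔ (⨅ k ∈ S, EB n (G k)) ≤ EB n B := by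
  rw [iInf_Hblock_eq_map, Hblock_eq_map, Submodule.map_le_iff_le_comap,
    Submodule.comap_map_eq, Submodule.ker_mkQ, sup_eq_left.mpr (diag_le_EB B)]

def rel {n m : ℕ} (G : Fin m → Finset (Fin n)) (S : Finset (Fin m)) :
    Fin n → Fin n → Prop :=
  Relation.EqvGen (fun a b => ∃ k ∈ S, a ∈ G k ∧ b ∈ G k)

lemma rel_refl {n m : ℕ} (G : Fin m → Finset (Fin n)) (S : Finset (Fin m)) (a : Fin n) :
    rel G S a a := Relation.EqvGen.refl a

lemma rel_symm {n m : ℕ} {G : Fin m → Finset (Fin n)} {S : Finset (Fin m)} {a b : Fin n}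
    (h : rel G S a b) : rel G S b a := Relation.EqvGen.symm a b h

lemma rel_trans {n m : ℕ} {G : Fin m → Finset (Fin n)} {S : Finset (Fin m)} {a b c : Fin n}
    (h1 : rel G S a b) (h2 : rel G S b c) : rel G S a c := Relation.EqvGen.trans a b c h1 h2

lemma rel_base {n m : ℕ} {G : Fin m → Finset (Fin n)} {S : Finset (Fin m)} {a b : Fin n}
    {k : Fin m} (hk : k ∈ S) (ha : a ∈ G k) (hb : b ∈ G k) : rel G S a b :=
  Relation.EqvGen.rel a b ⟨k, hk, ha, hb⟩

lemma rel_cases {n m : ℕ} {G : Fin m → Finset (Fin n)} {S : Finset (Fin m)} {a b : Fin n}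
    (h : rel G S a b) :
    a = b ∨ ((∃ k ∈ S, a ∈ G k) ∧ ∃ k ∈ S, b ∈ G k) := by
  have h' : Relation.EqvGen (fun a b => ∃ k ∈ S, a ∈ G k ∧ b ∈ G k) a b := h
  clear h
  induction h' with
  | rel x y hxy =>
    obtain ⟨k, hk, hx, hy⟩ := hxy
    exact Or.inr ⟨⟨k, hk, hx⟩, ⟨k, hk, hy⟩⟩
  | refl x => exact Or.inl rfl
  | symm x y h ih =>
    rcases ih with h' | ⟨h1, h2⟩
    exacts [Or.inl h'.symm, Or.inr ⟨h2, h1⟩]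
  | trans x y z h1 h2 ih1 ih2 =>
    rcases ih1 with rfl | ⟨ha, hb⟩
    · exact ih2
    · rcases ih2 with rfl | ⟨hb', hc⟩
      · exact Or.inr ⟨ha, hb⟩
      · exact Or.inr ⟨ha, hc⟩

lemma mem_iInf_EB {n m : ℕ} {G : Fin m → Finset (Fin n)} {S : Finset (Fin m)}
    {x : Fin n → ℂ} :
    x ∈ (⨅ k ∈ S, EB n (G k)) ↔ ∀ i j, rel G S i j → x i = x j := by
  simp only [Submodule.mem_iInf]
  constructor
  · intro h i j hij
    have h' : Relation.EqvGen (fun a b => ∃ k ∈ S, a ∈ G k ∧ b ∈ G k) i j := hij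
    clear hij
    induction h' with
    | rel a b hab =>
      obtain ⟨k, hk, ha, hb⟩ := hab
      exact mem_EB.1 (h k hk) a ha b hb
    | refl a => rfl
    | symm a b h ih => exact ih.symm
    | trans a b c h1 h2 ih1 ih2 => exact ih1.trans ih2
  · intro h k hk
    exact mem_EB.2 fun i hi j hj => h i j (rel_base hk hi hj)

lemma rel_of_le {n m : ℕ} {G : Fin m → Finset (Fin n)} {S : Finset (Fin m)}
    {B : Finset (Fin n)} (h : (⨅ k ∈ S, EB n (G k)) ≤ EB n B)
    {a b : Fin n} (ha : a ∈ B) (hb : b ∈ B) : rel G S a b := by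
  classical
  set x : Fin n → ℂ := fun v => if rel G S a v then 1 else 0 with hxdef
  have hxmem : x ∈ ⨅ k ∈ S, EB n (G k) := by
    rw [mem_iInf_EB]
    intro i j hij
    by_cases h1 : rel G S a i
    · simp only [hxdef, if_pos h1, if_pos (rel_trans h1 hij)]
    · simp only [hxdef, if_neg h1, if_neg (fun h2 => h1 (rel_trans h2 (rel_symm hij)))]
  have hab := mem_EB.1 (h hxmem) a ha b hb
  by_contra hc
  simp only [hxdef, if_pos (rel_refl G S a), if_neg hc] at hab
  exact one_ne_zero hab

lemma EB_mono {n : ℕ} {B₁ B₂ : Finset (Fin n)} (h : B₂ ⊆ B₁) : EB n B₁ ≤ EB n B₂ :=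
  fun _ hx => mem_EB.2 fun i hi j hj => mem_EB.1 hx i (h hi) j (h hj)

lemma subset_of_EB_le {n : ℕ} {B₁ B₂ : Finset (Fin n)} (h : EB n B₁ ≤ EB n B₂)
    (hcard : 2 ≤ B₂.card) : B₂ ⊆ B₁ := by
  intro b hb
  by_contra hbB
  classical
  set x : Fin n → ℂ := fun v => if v = b then 0 else 1 with hxdef
  have hx1 : x ∈ EB n B₁ := mem_EB.2 fun i hi j hj => by
    simp only [hxdef, if_neg (fun h' : i = b => hbB (h' ▸ hi)),
      if_neg (fun h' : j = b => hbB (h' ▸ hj))]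
  obtain ⟨c, hc, hcb⟩ := Finset.exists_mem_ne (show 1 < B₂.card by omega) b
  have := mem_EB.1 (h hx1) c hc b hb
  simp only [hxdef, if_neg hcb, if_pos rfl] at this
  exact one_ne_zero this

lemma iInf_EB_le_EB {n m : ℕ} {G : Fin m → Finset (Fin n)} {S : Finset (Fin m)}
    {B : Finset (Fin n)} (h : ∀ a ∈ B, ∀ b ∈ B, rel G S a b) :
    (⨅ k ∈ S, EB n (G k)) ≤ EB n B :=
  fun _ hx => mem_EB.2 fun i hi j hj => mem_iInf_EB.1 hx i j (h i hi j hj)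

open Classical in
noncomputable def classOf {n m : ℕ} (G : Fin m → Finset (Fin n)) (S : Finset (Fin m))
    (a : Fin n) : Finset (Fin n) :=
  Finset.univ.filter (fun b => rel G S a b)

lemma mem_classOf {n m : ℕ} {G : Fin m → Finset (Fin n)} {S : Finset (Fin m)}
    {a b : Fin n} : b ∈ classOf G S a ↔ rel G S a b := by
  simp [classOf]

lemma classOf_eq_of_rel {n m : ℕ} {G : Fin m → Finset (Fin n)} {S : Finset (Fin m)}
    {a b : Fin n} (h : rel G S a b) : classOf G S a = classOf G S b := by
  ext c
  simp only [mem_classOf]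
  exact ⟨fun h' => rel_trans (rel_symm h) h', fun h' => rel_trans h h'⟩

lemma self_mem_classOf {n m : ℕ} (G : Fin m → Finset (Fin n)) (S : Finset (Fin m))
    (a : Fin n) : a ∈ classOf G S a := mem_classOf.2 (rel_refl G S a)

noncomputable def repOf {n m : ℕ} (G : Fin m → Finset (Fin n)) (S : Finset (Fin m))
    (a : Fin n) : Fin n :=
  (classOf G S a).min' ⟨a, self_mem_classOf G S a⟩

lemma repOf_mem {n m : ℕ} (G : Fin m → Finset (Fin n)) (S : Finset (Fin m)) (a : Fin n) :
    repOf G S a ∈ classOf G S a := Finset.min'_mem _ _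

lemma rel_repOf {n m : ℕ} (G : Fin m → Finset (Fin n)) (S : Finset (Fin m)) (a : Fin n) :
    rel G S a (repOf G S a) := mem_classOf.1 (repOf_mem G S a)

lemma repOf_eq_of_rel {n m : ℕ} {G : Fin m → Finset (Fin n)} {S : Finset (Fin m)}
    {a b : Fin n} (h : rel G S a b) : repOf G S a = repOf G S b := by
  unfold repOf
  congr 1
  exact classOf_eq_of_rel h

lemma repOf_idem {n m : ℕ} (G : Fin m → Finset (Fin n)) (S : Finset (Fin m)) (a : Fin n) :
    repOf G S (repOf G S a) = repOf G S a :=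
  (repOf_eq_of_rel (rel_repOf G S a)).symm


set_option synthInstance.maxHeartbeats 1000000 in
/-- Order the building set 𝒢̂ of the coned graph ĈΓ so that blocks containing the apex
0 come first, each part in an order refining inclusion of the corresponding subspaces
(larger blocks first). Then every initial segment 𝒢̂_t is building: for any nonempty
family S of indices < t, the intersection H of the corresponding subspaces equals the
intersection of the minimal elements of 𝒢̂_t containing H, the blocks of these minimal
elements are pairwise disjoint, and the intersection is transversal (codimensions
add). -/
theorem stmt_18 (n : ℕ) (Γ : SimpleGraph (Fin n)) (m : ℕ)
    (G : Fin m → Finset (Fin (n + 1)))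
    (hblock : ∀ i, 2 ≤ (G i).card ∧
      ((coneGraph Γ).induce ((G i : Set (Fin (n + 1))))).Connected)
    (hinj : Function.Injective G)
    (hsurj : ∀ B : Finset (Fin (n + 1)), 2 ≤ B.card →
      ((coneGraph Γ).induce (B : Set (Fin (n + 1)))).Connected → ∃ i, G i = B)
    (horder1 : ∀ i j, ((0 : Fin (n + 1)) ∈ G i ↔ (0 : Fin (n + 1)) ∈ G j) →
      G j ⊂ G i → i < j)
    (horder2 : ∀ i j, (0 : Fin (n + 1)) ∈ G i → (0 : Fin (n + 1)) ∉ G j → i < j) :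
    ∀ t : ℕ, ∀ S : Finset (Fin m), S.Nonempty → (∀ i ∈ S, i.val < t) →
      ∀ Min : Finset (Fin m),
        (∀ i : Fin m, i ∈ Min ↔
          (i.val < t ∧ (⨅ k ∈ S, Hblock (n + 1) (G k)) ≤ Hblock (n + 1) (G i) ∧
            ∀ j : Fin m, j.val < t →
              (⨅ k ∈ S, Hblock (n + 1) (G k)) ≤ Hblock (n + 1) (G j) →
                Hblock (n + 1) (G j) ≤ Hblock (n + 1) (G i) → G j = G i)) →
        ((⨅ k ∈ S, Hblock (n + 1) (G k)) = (⨅ i ∈ Min, Hblock (n + 1) (G i))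
          ∧ (∀ i ∈ Min, ∀ j ∈ Min, i ≠ j → Disjoint (G i) (G j))
          ∧ codim (n + 1) (⨅ k ∈ S, Hblock (n + 1) (G k)) =
              ∑ i ∈ Min, ((G i).card - 1)) := by
  intro t S hSne hSt Min hMin
  classical
  obtain ⟨k0, hk0S⟩ := hSne
  have hGne : ∀ i : Fin m, (G i).Nonempty := fun i =>
    Finset.card_pos.1 (by have := (hblock i).1; omega)
  have hWleEB : ∀ B : Finset (Fin (n+1)),
      ((⨅ k ∈ S, Hblock (n+1) (G k)) ≤ Hblock (n+1) B ↔
        (⨅ k ∈ S, EB (n+1) (G k)) ≤ EB (n+1) B) := fun B => iInf_Hblock_le_iff G S B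
  have hWleClass : ∀ a, (⨅ k ∈ S, EB (n+1) (G k)) ≤ EB (n+1) (classOf G S a) :=
    fun a => iInf_EB_le_EB fun u hu v hv =>
      rel_trans (rel_symm (mem_classOf.1 hu)) (mem_classOf.1 hv)
  have hreach : ∀ a : Fin (n+1), ∀ u v : Fin (n+1), rel G S u v →
      ∀ (hu : u ∈ ((classOf G S a : Finset (Fin (n+1))) : Set (Fin (n+1))))
        (hv : v ∈ ((classOf G S a : Finset (Fin (n+1))) : Set (Fin (n+1)))),
      ((coneGraph Γ).induce
        ((classOf G S a : Finset (Fin (n+1))) : Set (Fin (n+1)))).Reachable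
        ⟨u, hu⟩ ⟨v, hv⟩ := by
    intro a u v huv
    have h' : Relation.EqvGen (fun x y => ∃ k ∈ S, x ∈ G k ∧ y ∈ G k) u v := huv
    clear huv
    induction h' with
    | rel u v h =>
      intro hu hv
      obtain ⟨k, hk, huk, hvk⟩ := h
      have hrelau : rel G S a u := mem_classOf.1 (Finset.mem_coe.1 hu)
      have hsub : ((G k : Finset (Fin (n+1))) : Set (Fin (n+1))) ⊆
          ((classOf G S a : Finset (Fin (n+1))) : Set (Fin (n+1))) := by
        intro g hg
        exact Finset.mem_coe.2 (mem_classOf.2 (rel_trans hrelau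
          (rel_base hk huk (Finset.mem_coe.1 hg))))
      have hr := ((hblock k).2).preconnected ⟨u, Finset.mem_coe.2 huk⟩
        ⟨v, Finset.mem_coe.2 hvk⟩
      exact hr.map ((coneGraph Γ).induceHomOfLE hsub).toHom
    | refl u =>
      intro hu hv
      exact SimpleGraph.Reachable.refl _
    | symm u v h ih =>
      intro hv hu
      exact (ih hu hv).symm
    | trans u v w h1 h2 ih1 ih2 =>
      intro hu hw
      have hv : v ∈ ((classOf G S a : Finset (Fin (n+1))) : Set (Fin (n+1))) :=
        Finset.mem_coe.2 (mem_classOf.2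
          (rel_trans (mem_classOf.1 (Finset.mem_coe.1 hu)) h1))
      exact (ih1 hu hv).trans (ih2 hv hw)
  have hconnC : ∀ a, 2 ≤ (classOf G S a).card →
      ((coneGraph Γ).induce
        ((classOf G S a : Finset (Fin (n+1))) : Set (Fin (n+1)))).Connected := by
    intro a hcard
    rw [SimpleGraph.connected_iff]
    refine ⟨?_, ⟨⟨a, Finset.mem_coe.2 (self_mem_classOf G S a)⟩⟩⟩
    rintro ⟨u, hu⟩ ⟨v, hv⟩
    exact hreach a u v (rel_trans (rel_symm (mem_classOf.1 (Finset.mem_coe.1 hu)))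
      (mem_classOf.1 (Finset.mem_coe.1 hv))) hu hv
  have hexGk : ∀ a, 2 ≤ (classOf G S a).card → ∀ e ∈ classOf G S a,
      ∃ k ∈ S, e ∈ G k ∧ G k ⊆ classOf G S a := by
    intro a hcard e he
    obtain ⟨b, hb, hbe⟩ := Finset.exists_mem_ne
      (show 1 < (classOf G S a).card by omega) e
    have hrel_eb : rel G S e b :=
      rel_trans (rel_symm (mem_classOf.1 he)) (mem_classOf.1 hb)
    rcases rel_cases hrel_eb with h | ⟨⟨k, hk, hek⟩, -⟩
    · exact absurd h.symm hbe
    · refine ⟨k, hk, hek, fun g hg => mem_classOf.2 ?_⟩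
      exact rel_trans (mem_classOf.1 he) (rel_base hk hek hg)
  have hclass_block : ∀ a, 2 ≤ (classOf G S a).card →
      ∃ j : Fin m, j.val < t ∧ G j = classOf G S a := by
    intro a hcard
    obtain ⟨j, hj⟩ := hsurj (classOf G S a) hcard (hconnC a hcard)
    refine ⟨j, ?_, hj⟩
    by_cases h0 : (0 : Fin (n+1)) ∈ classOf G S a
    · obtain ⟨k, hk, h0k, hksub⟩ := hexGk a hcard 0 h0
      by_cases heq : G k = classOf G S a
      · have hjk : j = k := hinj (hj.trans heq.symm)
        rw [hjk]; exact hSt k hk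
      · have hss : G k ⊂ G j := by
          rw [hj]; exact Finset.ssubset_iff_subset_ne.mpr ⟨hksub, heq⟩
        have hlt := horder1 j k (iff_of_true (by rw [hj]; exact h0) h0k) hss
        have hkt := hSt k hk
        have hjklt : j.val < k.val := hlt
        omega
    · obtain ⟨k, hk, hak, hksub⟩ := hexGk a hcard a (self_mem_classOf G S a)
      have h0k : (0 : Fin (n+1)) ∉ G k := fun hc => h0 (hksub hc)
      by_cases heq : G k = classOf G S a
      · have hjk : j = k := hinj (hj.trans heq.symm)
        rw [hjk]; exact hSt k hk
      · have hss : G k ⊂ G j := by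
          rw [hj]; exact Finset.ssubset_iff_subset_ne.mpr ⟨hksub, heq⟩
        have hlt := horder1 j k (iff_of_false (by rw [hj]; exact h0) h0k) hss
        have hkt := hSt k hk
        have hjklt : j.val < k.val := hlt
        omega
  have hMin' : ∀ i : Fin m, i ∈ Min ↔ (i.val < t ∧ ∃ a, G i = classOf G S a) := by
    intro i
    constructor
    · intro hi
      obtain ⟨hit, hle, hmax⟩ := (hMin i).1 hi
      obtain ⟨a, ha⟩ := hGne i
      have hrel : ∀ b ∈ G i, ∀ c ∈ G i, rel G S b c := fun b hb c hc =>
        rel_of_le ((hWleEB (G i)).1 hle) hb hc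
      have hsubCa : G i ⊆ classOf G S a := fun b hb => mem_classOf.2 (hrel a ha b hb)
      have hcard : 2 ≤ (classOf G S a).card :=
        le_trans (hblock i).1 (Finset.card_le_card hsubCa)
      obtain ⟨j, hjt, hjC⟩ := hclass_block a hcard
      have hj2 : (⨅ k ∈ S, Hblock (n+1) (G k)) ≤ Hblock (n+1) (G j) :=
        (hWleEB (G j)).2 (by rw [hjC]; exact hWleClass a)
      have hj3 : Hblock (n+1) (G j) ≤ Hblock (n+1) (G i) :=
        (Hblock_le_iff _ _).2 (EB_mono (by rw [hjC]; exact hsubCa))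
      have hji := hmax j hjt hj2 hj3
      exact ⟨hit, a, by rw [← hji, hjC]⟩
    · rintro ⟨hit, a, hGa⟩
      refine (hMin i).2 ⟨hit, (hWleEB (G i)).2 (by rw [hGa]; exact hWleClass a), ?_⟩
      intro j hjt hjle hji
      have hsub : G i ⊆ G j := subset_of_EB_le ((Hblock_le_iff _ _).1 hji) (hblock i).1
      have haGi : a ∈ G i := by rw [hGa]; exact self_mem_classOf G S a
      have haGj : a ∈ G j := hsub haGi
      have hrelj : ∀ b ∈ G j, ∀ c ∈ G j, rel G S b c := fun b hb c hc =>
        rel_of_le ((hWleEB (G j)).1 hjle) hb hc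
      have hsub2 : G j ⊆ G i := by
        rw [hGa]
        exact fun b hb => mem_classOf.2 (hrelj a haGj b hb)
      exact Finset.Subset.antisymm hsub2 hsub
  refine ⟨?_, ?_, ?_⟩
  · apply le_antisymm
    · exact le_iInf₂ fun i hi => ((hMin i).1 hi).2.1
    · refine le_iInf₂ fun k hk => ?_
      obtain ⟨a, ha⟩ := hGne k
      have hsub : G k ⊆ classOf G S a := fun g hg => mem_classOf.2 (rel_base hk ha hg)
      have hcard : 2 ≤ (classOf G S a).card :=
        le_trans (hblock k).1 (Finset.card_le_card hsub)
      obtain ⟨j, hjt, hjC⟩ := hclass_block a hcard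
      have hjMin : j ∈ Min := (hMin' j).2 ⟨hjt, a, hjC⟩
      exact le_trans (iInf₂_le j hjMin)
        ((Hblock_le_iff _ _).2 (EB_mono (by rw [hjC]; exact hsub)))
  · intro i hi j hj hij
    obtain ⟨-, a, hia⟩ := (hMin' i).1 hi
    obtain ⟨-, b, hjb⟩ := (hMin' j).1 hj
    rw [Finset.disjoint_left]
    intro x hxi hxj
    apply hij
    apply hinj
    rw [hia, hjb]
    apply classOf_eq_of_rel
    have h1 : rel G S a x := mem_classOf.1 (by rw [← hia]; exact hxi)
    have h2 : rel G S b x := mem_classOf.1 (by rw [← hjb]; exact hxj)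
    exact rel_trans h1 (rel_symm h2)
  · set Rep : Finset (Fin (n+1)) := Finset.univ.filter (fun a => repOf G S a = a)
      with hRepdef
    have hmemRep : ∀ a, a ∈ Rep ↔ repOf G S a = a := by
      intro a; simp [hRepdef]
    have hdiagW : diagLine (n+1) ≤ ⨅ k ∈ S, EB (n+1) (G k) :=
      le_iInf₂ fun k _ => diag_le_EB (G k)
    have hfinW : Module.finrank ℂ ↥(⨅ k ∈ S, EB (n+1) (G k)) = Rep.card := by
      have e : ↥(⨅ k ∈ S, EB (n+1) (G k)) ≃ₗ[ℂ] (↥Rep → ℂ) :=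
        { toFun := fun x r => x.1 r.1
          map_add' := fun x y => rfl
          map_smul' := fun c x => rfl
          invFun := fun y => ⟨fun i => y ⟨repOf G S i, (hmemRep _).2 (repOf_idem G S i)⟩, by
            rw [mem_iInf_EB]
            intro i j hij
            exact congrArg y (Subtype.ext (repOf_eq_of_rel hij))⟩
          left_inv := fun x => Subtype.ext (funext fun i =>
            (mem_iInf_EB.1 x.2 i (repOf G S i) (rel_repOf G S i)).symm)
          right_inv := fun y => funext fun r =>
            congrArg y (Subtype.ext ((hmemRep _).1 r.2)) }
      rw [e.finrank_eq, Module.finrank_fintype_fun_eq_card]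
      exact Fintype.card_coe Rep
    have hdiag1 : Module.finrank ℂ ↥(diagLine (n+1)) = 1 := by
      have hne : (fun _ => (1:ℂ)) ≠ (0 : Fin (n+1) → ℂ) := by
        intro h
        have := congrFun h 0
        simp at this
      rw [diagLine]
      exact finrank_span_singleton hne
    have hfrkQ : Module.finrank ℂ (Qspace (n+1)) = n := by
      have h := Submodule.finrank_quotient_add_finrank (diagLine (n+1))
      rw [hdiag1, Module.finrank_fintype_fun_eq_card, Fintype.card_fin] at h
      show Module.finrank ℂ ((Fin (n+1) → ℂ) ⧸ diagLine (n+1)) = n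
      omega
    have hfrkH : Module.finrank ℂ ↥(⨅ k ∈ S, Hblock (n+1) (G k)) = Rep.card - 1 := by
      rw [iInf_Hblock_eq_map G S]
      set W := ⨅ k ∈ S, EB (n+1) (G k) with hWdef
      set φ : ↥W →ₗ[ℂ] Qspace (n+1) := (diagLine (n+1)).mkQ.comp W.subtype with hφdef
      have hrange : LinearMap.range φ = Submodule.map (diagLine (n+1)).mkQ W := by
        rw [hφdef, LinearMap.range_comp, Submodule.range_subtype]
      have hker : LinearMap.ker φ = Submodule.comap W.subtype (diagLine (n+1)) := by
        rw [hφdef, LinearMap.ker_comp, Submodule.ker_mkQ]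
      have hkerrank : Module.finrank ℂ ↥(LinearMap.ker φ) = 1 := by
        rw [hker, (Submodule.comapSubtypeEquivOfLe hdiagW).finrank_eq, hdiag1]
      have hrn := LinearMap.finrank_range_add_finrank_ker φ
      rw [hrange, hkerrank, hfinW] at hrn
      omega
    have hRepne : 0 < Rep.card :=
      Finset.card_pos.2 ⟨repOf G S 0, (hmemRep _).2 (repOf_idem G S 0)⟩
    have hdisjRep : ∀ x ∈ Rep, ∀ y ∈ Rep, x ≠ y →
        Disjoint (classOf G S x) (classOf G S y) := by
      intro x hx y hy hxy
      rw [Finset.disjoint_left]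
      intro z hzx hzy
      apply hxy
      have h1 : repOf G S x = repOf G S z := repOf_eq_of_rel (mem_classOf.1 hzx)
      have h2 : repOf G S y = repOf G S z := repOf_eq_of_rel (mem_classOf.1 hzy)
      rw [← (hmemRep x).1 hx, ← (hmemRep y).1 hy, h1, h2]
    have hbiUnion : Rep.biUnion (fun ρ => classOf G S ρ) = Finset.univ := by
      ext x
      simp only [Finset.mem_biUnion, Finset.mem_univ, iff_true]
      exact ⟨repOf G S x, (hmemRep _).2 (repOf_idem G S x),
        mem_classOf.2 (rel_symm (rel_repOf G S x))⟩
    have hsum1 : ∑ ρ ∈ Rep, (classOf G S ρ).card = n + 1 := by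
      rw [← Finset.card_biUnion hdisjRep, hbiUnion, Finset.card_univ, Fintype.card_fin]
    have hsum2 : ∑ ρ ∈ Rep, (classOf G S ρ).card
        = Rep.card + ∑ ρ ∈ Rep, ((classOf G S ρ).card - 1) := by
      have hterm : ∀ ρ ∈ Rep, (classOf G S ρ).card = 1 + ((classOf G S ρ).card - 1) := by
        intro ρ _
        have h1 : 0 < (classOf G S ρ).card :=
          Finset.card_pos.2 ⟨ρ, self_mem_classOf G S ρ⟩
        omega
      rw [Finset.sum_congr rfl hterm, Finset.sum_add_distrib, Finset.sum_const,
        smul_eq_mul, mul_one]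
    set Rep2 := Rep.filter (fun ρ => 2 ≤ (classOf G S ρ).card) with hRep2def
    have hsum3 : ∑ ρ ∈ Rep, ((classOf G S ρ).card - 1)
        = ∑ ρ ∈ Rep2, ((classOf G S ρ).card - 1) := by
      refine (Finset.sum_subset (Finset.filter_subset _ _) ?_).symm
      intro ρ hρ hρ2
      have hcardρ : ¬ 2 ≤ (classOf G S ρ).card := by
        intro hc
        exact hρ2 (Finset.mem_filter.2 ⟨hρ, hc⟩)
      omega
    set f : Fin m → Fin (n+1) := fun i => repOf G S ((G i).min' (hGne i)) with hfdef
    set g : Fin (n+1) → Fin m := fun a =>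
      if h : ∃ j : Fin m, G j = classOf G S a then h.choose else k0 with hgdef
    have hgspec : ∀ a, (∃ j : Fin m, G j = classOf G S a) → G (g a) = classOf G S a := by
      intro a h
      rw [hgdef]
      simp only [dif_pos h]
      exact h.choose_spec
    have hclassf : ∀ i ∈ Min, classOf G S (f i) = G i := by
      intro i hi
      obtain ⟨-, a, hGa⟩ := (hMin' i).1 hi
      have hmin : (G i).min' (hGne i) ∈ G i := Finset.min'_mem _ _
      have h1 : rel G S a ((G i).min' (hGne i)) :=
        mem_classOf.1 (by rw [← hGa]; exact hmin)
      show classOf G S (repOf G S ((G i).min' (hGne i))) = G i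
      calc classOf G S (repOf G S ((G i).min' (hGne i)))
          = classOf G S ((G i).min' (hGne i)) :=
            (classOf_eq_of_rel (rel_repOf G S _)).symm
        _ = classOf G S a := (classOf_eq_of_rel h1).symm
        _ = G i := hGa.symm
    have hfRep2 : ∀ i ∈ Min, f i ∈ Rep2 := by
      intro i hi
      rw [hRep2def, Finset.mem_filter]
      refine ⟨(hmemRep _).2 (repOf_idem G S _), ?_⟩
      rw [hclassf i hi]
      exact (hblock i).1
    have hgMin : ∀ ρ ∈ Rep2, g ρ ∈ Min ∧ G (g ρ) = classOf G S ρ := by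
      intro ρ hρ
      have hcard : 2 ≤ (classOf G S ρ).card := (Finset.mem_filter.1 hρ).2
      obtain ⟨j, hjt, hjC⟩ := hclass_block ρ hcard
      have hex : ∃ j : Fin m, G j = classOf G S ρ := ⟨j, hjC⟩
      have hg := hgspec ρ hex
      have hgj : g ρ = j := hinj (hg.trans hjC.symm)
      refine ⟨?_, hg⟩
      rw [hgj]
      exact (hMin' j).2 ⟨hjt, ρ, hjC⟩
    have hgf : ∀ i ∈ Min, g (f i) = i := by
      intro i hi
      have h1 : G (g (f i)) = classOf G S (f i) := hgspec _ ⟨i, (hclassf i hi).symm⟩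
      exact hinj (h1.trans (hclassf i hi))
    have hfg : ∀ ρ ∈ Rep2, f (g ρ) = ρ := by
      intro ρ hρ
      have hg := (hgMin ρ hρ).2
      have hmin : (G (g ρ)).min' (hGne _) ∈ G (g ρ) := Finset.min'_mem _ _
      have h1 : rel G S ρ ((G (g ρ)).min' (hGne _)) :=
        mem_classOf.1 (by rw [← hg]; exact hmin)
      show repOf G S ((G (g ρ)).min' (hGne _)) = ρ
      rw [← repOf_eq_of_rel h1]
      exact (hmemRep ρ).1 (Finset.mem_filter.1 hρ).1
    have hsum4 : ∑ i ∈ Min, ((G i).card - 1) = ∑ ρ ∈ Rep2, ((classOf G S ρ).card - 1) := by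
      refine Finset.sum_nbij' f g hfRep2 (fun ρ hρ => (hgMin ρ hρ).1) hgf hfg ?_
      intro i hi
      rw [hclassf i hi]
    unfold codim
    rw [hfrkQ, hfrkH, hsum4, ← hsum3]
    have hs := hsum1
    rw [hsum2] at hs
    omega
end
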